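/- Let 𝒜 be a finite nonempty set of attributes, each a function a : X → [0,1] on a set X of instances, and let μ be a self-dual monotone measure on 𝒜 (i.e., μ̄ = μ). Then for all x, y ∈ X, R^μ(x, y) = μ(𝒜) − d^μ(x, y). -/

import Mathlib

open Finset

/-- The set `{x*_k, …, x*_{n-1}}` (0-indexed): the image under the enumeration `e`
of the indices `≥ k`. -/
def upSet {X : Type*} [DecidableEq X] {n : ℕ} (e : Fin n ≃ X) (k : ℕ) : Finset X :=
  (Finset.univ.filter fun j : Fin n => k ≤ (j : ℕ)).image e

/-- The Choquet integral of `f` with respect to the set function `μ`, computed via an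
enumeration `e : Fin n ≃ X` (assumed to sort `f` nondecreasingly):
`∑ i, f(x*_i) · [μ(A*_i) − μ(A*_{i+1})]` where `A*_i = {x*_i, …, x*_{n-1}}`
(note `A*_n = ∅`, and `μ ∅ = 0` for a monotone measure). -/
def choquetSum {X : Type*} [DecidableEq X] {n : ℕ} (μ : Finset X → ℝ) (f : X → ℝ)
    (e : Fin n ≃ X) : ℝ :=
  ∑ i : Fin n, f (e i) * (μ (upSet e i) - μ (upSet e ((i : ℕ) + 1)))

/-- The dual measure `μ̄(A) := μ(X) − μ(X \ A)`. -/
def dualMeasure {X : Type*} [Fintype X] [DecidableEq X] (μ : Finset X → ℝ) :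
    Finset X → ℝ :=
  fun A => μ Finset.univ - μ (Finset.univ \ A)

/-! Splitting off the constant, `∫ (1 - d) dμ = μ(𝒜) - ∑ d(x*_i) [μ(A*_i) - μ(A*_{i+1})]`, where
the order sorting `1 - d` is the reverse of one sorting `d`. Along the reversed order the tails
`A*_i` become complements of tails, which turns this sum into the Choquet integral of `d` with
respect to the dual measure, and `μ̄ = μ`. What remains is that a Choquet sum does not depend on
how ties are broken: after Abel summation it involves only the sorted values and, at their
jumps, the upper level sets `{f ≥ t}`. -/

theorem comp_eq_comp_of_monotone {X α : Type*} [PartialOrder α] {n : ℕ} {f : X → α}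
    {e e' : Fin n ≃ X} (h : Monotone (f ∘ e)) (h' : Monotone (f ∘ e')) : f ∘ e = f ∘ e' := by
  have hτ : (f ∘ e) ∘ (e'.trans e.symm) = f ∘ e' := by ext; simp
  calc f ∘ e = (f ∘ e) ∘ ⇑(1 : Equiv.Perm (Fin n)) := rfl
    _ = (f ∘ e) ∘ (e'.trans e.symm) := Tuple.unique_monotone h (hτ ▸ h')
    _ = f ∘ e' := hτ

theorem Antitone.monotone_comp_revPerm_trans {X α : Type*} [Preorder α] {n : ℕ} {f : X → α}
    {e : Fin n ≃ X} (h : Antitone (f ∘ e)) : Monotone (f ∘ (Fin.revPerm.trans e)) :=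
  fun _ _ hij => h (Fin.rev_le_rev.mpr hij)

section Choquet

variable {X : Type*} [DecidableEq X] {n : ℕ}

theorem mem_upSet (e : Fin n ≃ X) (k : ℕ) (a : X) : a ∈ upSet e k ↔ k ≤ (e.symm a : ℕ) := by
  simp only [upSet, mem_image, mem_filter, mem_univ, true_and]
  exact ⟨by rintro ⟨j, hj, rfl⟩; simpa using hj, fun hk => ⟨e.symm a, hk, e.apply_symm_apply a⟩⟩

theorem upSet_zero [Fintype X] (e : Fin n ≃ X) : upSet e 0 = univ := by
  ext a; simp [mem_upSet]

theorem upSet_eq_empty_of_le (e : Fin n ≃ X) {k : ℕ} (hk : n ≤ k) : upSet e k = ∅ := by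
  ext a; simp only [mem_upSet, notMem_empty, iff_false, not_le]; omega

theorem upSet_revPerm_trans [Fintype X] (e : Fin n ≃ X) {k : ℕ} (hk : k ≤ n) :
    upSet (Fin.revPerm.trans e) k = univ \ upSet e (n - k) := by
  ext a
  have := (e.symm a).isLt
  simp only [mem_upSet, mem_sdiff, mem_univ, true_and, Equiv.symm_trans_apply,
    Fin.revPerm_symm, Fin.revPerm_apply, Fin.val_rev]
  omega

theorem upSet_eq_filter_le [Fintype X] {f : X → ℝ} {e : Fin n ≃ X} (hf : Monotone (f ∘ e))
    {j : Fin n} (hj : ∀ i < j, f (e i) < f (e j)) : upSet e j = univ.filter (f (e j) ≤ f ·) := by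
  ext a
  rw [mem_upSet, mem_filter, ← Fin.le_def]
  refine ⟨fun h => ⟨mem_univ a, by simpa using hf h⟩, fun ⟨_, h⟩ => ?_⟩
  by_contra hlt
  simpa using (hj _ (not_le.mp hlt)).trans_le h

theorem choquetSum_eq_sum_increments [Fintype X] {m : ℕ} (μ : Finset X → ℝ) (f : X → ℝ)
    (e : Fin (m + 1) ≃ X) :
    choquetSum μ f e = f (e 0) * μ univ - f (e (Fin.last m)) * μ ∅ +
      ∑ i : Fin m, (f (e i.succ) - f (e i.castSucc)) * μ (upSet e (i + 1)) := by
  have hsplit : choquetSum μ f e = ∑ i : Fin (m + 1), f (e i) * μ (upSet e i) -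
      ∑ i : Fin (m + 1), f (e i) * μ (upSet e (i + 1)) := by
    simp only [choquetSum, mul_sub, sum_sub_distrib]
  rw [hsplit, Fin.sum_univ_succ, Fin.sum_univ_castSucc]
  simp only [Fin.val_zero, Fin.val_succ, Fin.val_castSucc, Fin.val_last, upSet_zero,
    upSet_eq_empty_of_le e le_rfl, sub_mul, sum_sub_distrib]
  ring

theorem increment_mul_measure_upSet_succ [Fintype X] {m : ℕ} (μ : Finset X → ℝ) {f : X → ℝ}
    {e : Fin (m + 1) ≃ X} (hf : Monotone (f ∘ e)) (i : Fin m) :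
    (f (e i.succ) - f (e i.castSucc)) * μ (upSet e (i + 1)) =
      (f (e i.succ) - f (e i.castSucc)) * μ (univ.filter (f (e i.succ) ≤ f ·)) := by
  rcases (hf (Fin.castSucc_le_succ i)).eq_or_lt with heq | hlt
  · simp [show f (e i.succ) = f (e i.castSucc) from heq.symm]
  · have hjump : ∀ k < i.succ, f (e k) < f (e i.succ) := fun k hk =>
      (hf (Fin.le_castSucc_iff.mpr hk)).trans_lt hlt
    rw [← Fin.val_succ, upSet_eq_filter_le hf hjump]

theorem choquetSum_eq_of_monotone [Fintype X] (μ : Finset X → ℝ) {f : X → ℝ}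
    {e e' : Fin n ≃ X} (h : Monotone (f ∘ e)) (h' : Monotone (f ∘ e')) :
    choquetSum μ f e = choquetSum μ f e' := by
  cases n with
  | zero => simp [choquetSum]
  | succ m =>
    have hval : ∀ i, f (e i) = f (e' i) := congrFun (comp_eq_comp_of_monotone h h')
    simp only [choquetSum_eq_sum_increments, increment_mul_measure_upSet_succ μ h,
      increment_mul_measure_upSet_succ μ h']
    simp only [hval]

theorem sum_measure_upSet_sub [Fintype X] (μ : Finset X → ℝ) (e : Fin n ≃ X) :
    ∑ i : Fin n, (μ (upSet e i) - μ (upSet e ((i : ℕ) + 1))) = μ univ - μ ∅ := by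
  rw [Fin.sum_univ_eq_sum_range (fun k => μ (upSet e k) - μ (upSet e (k + 1))), sum_range_sub',
    upSet_zero, upSet_eq_empty_of_le e le_rfl]

theorem choquetSum_const_sub [Fintype X] (μ : Finset X → ℝ) (c : ℝ) (f : X → ℝ)
    (e : Fin n ≃ X) :
    choquetSum μ (fun a => c - f a) e = c * (μ univ - μ ∅) - choquetSum μ f e := by
  simp only [choquetSum, sub_mul, sum_sub_distrib, ← mul_sum]
  rw [← sum_sub_distrib, sum_measure_upSet_sub]

theorem choquetSum_dualMeasure_revPerm [Fintype X] (μ : Finset X → ℝ) (f : X → ℝ)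
    (e : Fin n ≃ X) : choquetSum (dualMeasure μ) f (Fin.revPerm.trans e) = choquetSum μ f e := by
  rw [choquetSum, choquetSum, ← Equiv.sum_comp Fin.revPerm]
  refine sum_congr rfl fun j _ => ?_
  have hj := j.isLt
  simp only [dualMeasure, Equiv.trans_apply, Fin.revPerm_apply, Fin.rev_rev, Fin.val_rev]
  rw [upSet_revPerm_trans e (by omega), upSet_revPerm_trans e (by omega),
    show n - (n - (j + 1) + 1) = j by omega, show n - (n - (j + 1)) = j + 1 by omega,
    Finset.sdiff_sdiff_eq_self (subset_univ _), Finset.sdiff_sdiff_eq_self (subset_univ _)]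
  ring

end Choquet

theorem choquet_similarity_eq_measure_sub_distance_of_self_dual_general
    {I A : Type*} [Fintype A] [DecidableEq A] {n : ℕ}
    (val : A → I → ℝ)
    (μ : Finset A → ℝ) (hμ_empty : μ ∅ = 0)
    (hself_dual : ∀ S : Finset A, dualMeasure μ S = μ S)
    (x y : I)
    (e₁ : Fin n ≃ A) (hsort₁ : Monotone (fun i => 1 - |val (e₁ i) x - val (e₁ i) y|))
    (e₂ : Fin n ≃ A) (hsort₂ : Monotone (fun i => |val (e₂ i) x - val (e₂ i) y|)) :
    choquetSum μ (fun a => 1 - |val a x - val a y|) e₁ =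
      μ Finset.univ - choquetSum μ (fun a => |val a x - val a y|) e₂ := by
  set d : A → ℝ := fun a => |val a x - val a y|
  have hanti : Antitone (d ∘ e₁) := fun _ _ hij => sub_le_sub_iff_left 1 |>.mp (hsort₁ hij)
  calc choquetSum μ (fun a => 1 - d a) e₁ = μ univ - choquetSum μ d e₁ := by
        rw [choquetSum_const_sub, hμ_empty]; ring
    _ = μ univ - choquetSum (dualMeasure μ) d (Fin.revPerm.trans e₁) := by
        rw [choquetSum_dualMeasure_revPerm]
    _ = μ univ - choquetSum μ d e₂ := by
        rw [funext hself_dual, choquetSum_eq_of_monotone μ hanti.monotone_comp_revPerm_trans hsort₂]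

/-- For a self-dual monotone measure `μ` on a finite nonempty set of
attributes `a : X → [0,1]`, the Choquet similarity and distance satisfy
`R^μ(x,y) = μ(𝒜) − d^μ(x,y)`. -/
theorem choquet_similarity_eq_measure_sub_distance_of_self_dual
    {I A : Type*} [Fintype A] [DecidableEq A] {n : ℕ} (hn : 0 < n)
    (val : A → I → ℝ) (hval : ∀ a x, val a x ∈ Set.Icc (0 : ℝ) 1)
    (μ : Finset A → ℝ) (hμ_empty : μ ∅ = 0)
    (hμ_mono : ∀ S T : Finset A, S ⊆ T → μ S ≤ μ T)
    (hself_dual : ∀ S : Finset A, dualMeasure μ S = μ S)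
    (x y : I)
    (e₁ : Fin n ≃ A) (hsort₁ : Monotone (fun i => 1 - |val (e₁ i) x - val (e₁ i) y|))
    (e₂ : Fin n ≃ A) (hsort₂ : Monotone (fun i => |val (e₂ i) x - val (e₂ i) y|)) :
    choquetSum μ (fun a => 1 - |val a x - val a y|) e₁ =
      μ Finset.univ - choquetSum μ (fun a => |val a x - val a y|) e₂ :=
  choquet_similarity_eq_measure_sub_distance_of_self_dual_general val μ hμ_empty hself_dual x y e₁
    hsort₁ e₂ hsort₂
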